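/- Let P_γ be a sub-spherical family on ℝⁿ, X₁, X₂ ⊂ ℝⁿ nonempty closed convex disjoint sets with at least one bounded, δ, s* the associated Euclidean-separation entities, and ε⋆ = ∫_δ^∞ γ(s)ds. Consider the K-observation majority test T^maj_K which, given the stationary K-repeated observations ω_k = x + ξ_k (k = 1, …, K) with ξ_k i.i.d. ∼ p ∈ P_γ, accepts H₁ : x ∈ X₁ when s*(ω_k) ≥ 0 for at least K/2 values of k, and accepts H₂ : x ∈ X₂ otherwise. Then the risk of T^maj_K, i.e., the maximum over χ ∈ {1,2} of sup_{x ∈ X_χ, p ∈ P_γ} of the probability that T^maj_K rejects H_χ, is at most Σ_{K ≥ k ≥ K/2} C(K,k) ε⋆^k (1 − ε⋆)^{K−k}. -/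

import Mathlib

open MeasureTheory Matrix
open scoped Classical

noncomputable section

/-- `p` is a probability density on `ℝⁿ` (w.r.t. Lebesgue measure). -/
def IsDensity {n : ℕ} (p : (Fin n → ℝ) → ℝ) : Prop :=
  (∀ x, 0 ≤ p x) ∧ (∫ x, p x) = 1

/-- `p` is an even function on `ℝⁿ`. -/
def IsEvenFn {n : ℕ} (p : (Fin n → ℝ) → ℝ) : Prop := ∀ x, p (-x) = p x

/-- `γ` is a probability density on `ℝ`. -/
def IsDensity1 (γ : ℝ → ℝ) : Prop := (∀ s, 0 ≤ γ s) ∧ (∫ s, γ s) = 1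

/-- `γ` is an even probability density on `ℝ`, positive in a neighbourhood of `0`. -/
def IsSpec (γ : ℝ → ℝ) : Prop :=
  IsDensity1 γ ∧ (∀ s, γ (-s) = γ s) ∧ ∃ ε > 0, ∀ s, |s| < ε → 0 < γ s

/-- `P_γ(δ) = ∫_δ^∞ γ(s) ds`. -/
def tailP (γ : ℝ → ℝ) (δ : ℝ) : ℝ := ∫ s in Set.Ici δ, γ s

/-- Membership of the density `p` in the sub-spherical family `P_γ^n`. -/
def SubSpherical {n : ℕ} (γ : ℝ → ℝ) (p : (Fin n → ℝ) → ℝ) : Prop :=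
  IsDensity p ∧ IsEvenFn p ∧
  ∀ e : Fin n → ℝ, e ⬝ᵥ e = 1 → ∀ δ : ℝ, 0 ≤ δ →
    (∫ ξ in {ξ | δ ≤ e ⬝ᵥ ξ}, p ξ) ≤ tailP γ δ

/-- The measure on `ℝⁿ` with density `p` w.r.t. Lebesgue measure. -/
def dMeas {n : ℕ} (p : (Fin n → ℝ) → ℝ) : Measure (Fin n → ℝ) :=
  volume.withDensity fun x => ENNReal.ofReal (p x)

/-- The measure on `ℝ` with density `γ` w.r.t. Lebesgue measure. -/
def dMeas1 (γ : ℝ → ℝ) : Measure ℝ :=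
  volume.withDensity fun s => ENNReal.ofReal (γ s)

/-!
By first-order optimality of the nearest pair `x1, x2`, the hyperplane `s* = 0` bisecting it
keeps `X₁` and `X₂` at distance at least `δ` on either side. An observation `x + ξ` is therefore
misclassified only when the noise `ξ` lands in a half-space at distance `δ` from the origin, which
for `p ∈ P_γ` has probability at most `ε⋆`. The majority test errs only when at least half of the
`K` independent observations are misclassified: a binomial tail event, of probability the binomial
tail at the true misclassification rate, and this tail is monotone in the rate.
-/

section Majority

open Finset

def binomialTail (K m : ℕ) (p : ℝ) : ℝ :=
  ∑ k ∈ Icc m K, (K.choose k : ℝ) * p ^ k * (1 - p) ^ (K - k)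

theorem sum_filter_le_two_mul_eq_binomialTail (K : ℕ) (p : ℝ) :
    ∑ k ∈ (range (K + 1)).filter (fun k => K ≤ 2 * k),
      (K.choose k : ℝ) * p ^ k * (1 - p) ^ (K - k) = binomialTail K ((K + 1) / 2) p := by
  rw [binomialTail]
  congr 1
  ext k
  simp only [mem_filter, mem_range, mem_Icc]
  omega

variable {α : Type*} [MeasurableSpace α] (μ : Measure α) [IsProbabilityMeasure μ] {B : Set α}

theorem measureReal_pi_setOf_le_card_filter_mem (hB : MeasurableSet B) (K m : ℕ) :
    (Measure.pi fun _ : Fin K => μ).real {ξ | m ≤ #{k | ξ k ∈ B}} =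
      binomialTail K m (μ.real B) := by
  set hits : (Fin K → α) → Finset (Fin K) := fun ξ => {k | ξ k ∈ B}
  have hfiber (A : Finset (Fin K)) :
      hits ⁻¹' {A} = Set.univ.pi fun k => if k ∈ A then B else Bᶜ := by
    ext ξ
    simp only [Set.mem_preimage, Set.mem_singleton_iff, Set.mem_univ_pi, Finset.ext_iff, hits,
      mem_filter, mem_univ, true_and]
    refine forall_congr' fun k => ?_
    split_ifs with hk <;> simp [hk]
  have hset : {ξ | m ≤ #{k | ξ k ∈ B}} =
      hits ⁻¹' ↑{A ∈ (univ : Finset (Fin K)).powerset | m ≤ #A} := by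
    ext ξ
    simp [hits]
  -- The fibres of `hits` are disjoint boxes, of measure `q ^ #A * (1 - q) ^ (K - #A)` where
  -- `q = μ.real B`.
  rw [hset, measureReal_def, ← sum_measure_preimage_singleton _ fun A _ => by
    rw [hfiber]; exact .univ_pi fun k => by split_ifs <;> simp [hB]]
  rw [ENNReal.toReal_sum fun A _ => measure_ne_top _ _, sum_filter]
  simp_rw [hfiber, Measure.pi_pi, ENNReal.toReal_prod, ← measureReal_def, apply_ite μ.real,
    probReal_compl_eq_one_sub hB, prod_ite, prod_const]
  have hcompl (A : Finset (Fin K)) : #{k | k ∉ A} = K - #A := by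
    rw [filter_not, filter_mem_eq_inter, univ_inter, card_sdiff_of_subset (subset_univ A),
      card_univ, Fintype.card_fin]
  simp only [filter_mem_eq_inter, univ_inter, hcompl]
  rw [sum_powerset_apply_card
      (fun k => if m ≤ k then μ.real B ^ k * (1 - μ.real B) ^ (K - k) else 0),
    card_univ, Fintype.card_fin, binomialTail,
    show Icc m K = {k ∈ range (K + 1) | m ≤ k} by ext; simp [and_comm], sum_filter]
  refine sum_congr rfl fun k _ => ?_
  split_ifs <;> simp [nsmul_eq_mul, mul_assoc]

theorem binomialTail_mono {p q : ℝ} (hp : 0 ≤ p) (hpq : p ≤ q) (hq : q ≤ 1) (K m : ℕ) :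
    binomialTail K m p ≤ binomialTail K m q := by
  -- Coupling: of `K` uniform samples from `[0, 1]`, those below `p` are among those below `q`.
  lift p to unitInterval using ⟨hp, hpq.trans hq⟩
  lift q to unitInterval using ⟨hp.trans hpq, hq⟩
  have hIic (r : unitInterval) : (volume : Measure unitInterval).real (Set.Iic r) = r := by
    simp [measureReal_def, r.2.1]
  rw [← hIic p, ← hIic q, ← measureReal_pi_setOf_le_card_filter_mem _ measurableSet_Iic,
    ← measureReal_pi_setOf_le_card_filter_mem _ measurableSet_Iic]
  refine measureReal_mono fun ξ (hξ : m ≤ _) => hξ.trans ?_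
  gcongr
  exact hpq

theorem measure_pi_setOf_le_card_filter_mem_le (hB : MeasurableSet B) {ε : ℝ}
    (hBε : μ.real B ≤ ε) (hε : ε ≤ 1) (K m : ℕ) :
    (Measure.pi fun _ : Fin K => μ) {ξ | m ≤ #{k | ξ k ∈ B}} ≤
      ENNReal.ofReal (binomialTail K m ε) := by
  rw [← ofReal_measureReal, measureReal_pi_setOf_le_card_filter_mem μ hB]
  exact ENNReal.ofReal_le_ofReal (binomialTail_mono measureReal_nonneg hBε hε K m)

end Majority

theorem nonneg_of_forall_Ioc_nonneg_add_mul {a b : ℝ} (h : ∀ t ∈ Set.Ioc (0 : ℝ) 1, 0 ≤ a + t * b) :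
    0 ≤ a := by
  have hlim : Filter.Tendsto (fun t => a + t * b) (nhdsWithin 0 (Set.Ioi 0)) (nhds a) := by
    have : Continuous fun t : ℝ => a + t * b := by fun_prop
    simpa using (this.tendsto 0).mono_left nhdsWithin_le_nhds
  exact ge_of_tendsto hlim (Filter.eventually_of_mem (Ioc_mem_nhdsGT one_pos) h)

theorem dotProduct_sub_nonneg_of_forall_le {ι : Type*} [Fintype ι] {X : Set (ι → ℝ)}
    (hX : Convex ℝ X) {a b : ι → ℝ} (ha : a ∈ X)
    (hmin : ∀ y ∈ X, (a - b) ⬝ᵥ (a - b) ≤ (y - b) ⬝ᵥ (y - b)) {x : ι → ℝ} (hx : x ∈ X) :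
    0 ≤ (a - b) ⬝ᵥ (x - a) := by
  set u := x - a
  refine nonneg_of_forall_Ioc_nonneg_add_mul (b := u ⬝ᵥ u / 2) fun t ht => ?_
  have hexp : (a + t • u - b) ⬝ᵥ (a + t • u - b) =
      (a - b) ⬝ᵥ (a - b) + 2 * t * ((a - b) ⬝ᵥ u + t * (u ⬝ᵥ u / 2)) := by
    rw [show a + t • u - b = (a - b) + t • u by abel]
    simp only [add_dotProduct, dotProduct_add, smul_dotProduct, dotProduct_smul, smul_eq_mul,
      dotProduct_comm u (a - b)]
    ring
  have := hmin _ (hX.add_smul_sub_mem ha hx (Set.Ioc_subset_Icc_self ht))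
  rw [hexp] at this
  nlinarith [ht.1]

theorem IsDensity.integrable {n : ℕ} {p : (Fin n → ℝ) → ℝ} (hp : IsDensity p) : Integrable p :=
  .of_integral_ne_zero (by rw [hp.2]; exact one_ne_zero)

theorem IsDensity.dMeas_apply {n : ℕ} {p : (Fin n → ℝ) → ℝ} (hp : IsDensity p)
    {S : Set (Fin n → ℝ)} (hS : MeasurableSet S) : dMeas p S = ENNReal.ofReal (∫ x in S, p x) := by
  rw [dMeas, withDensity_apply _ hS,
    ← ofReal_integral_eq_lintegral_ofReal hp.integrable.restrict (ae_of_all _ hp.1)]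

theorem IsDensity.isProbabilityMeasure_dMeas {n : ℕ} {p : (Fin n → ℝ) → ℝ} (hp : IsDensity p) :
    IsProbabilityMeasure (dMeas p) :=
  ⟨by rw [hp.dMeas_apply .univ, Measure.restrict_univ, hp.2, ENNReal.ofReal_one]⟩

theorem SubSpherical.measureReal_halfSpace_le {n : ℕ} {γ : ℝ → ℝ} {p : (Fin n → ℝ) → ℝ}
    (hp : SubSpherical γ p) {e : Fin n → ℝ} (he : e ⬝ᵥ e = 1) {δ : ℝ} (hδ : 0 ≤ δ) :
    (dMeas p).real {ξ | δ ≤ e ⬝ᵥ ξ} ≤ tailP γ δ := by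
  have hS : MeasurableSet {ξ | δ ≤ e ⬝ᵥ ξ} := measurableSet_le measurable_const (by fun_prop)
  rw [measureReal_def, hp.1.dMeas_apply hS,
    ENNReal.toReal_ofReal (setIntegral_nonneg hS fun x _ => hp.1.1 x)]
  exact hp.2.2 e he δ hδ

theorem IsDensity1.integrable {γ : ℝ → ℝ} (hγ : IsDensity1 γ) : Integrable γ :=
  .of_integral_ne_zero (by rw [hγ.2]; exact one_ne_zero)

theorem tailP_le_one {γ : ℝ → ℝ} (hγ : IsDensity1 γ) (δ : ℝ) : tailP γ δ ≤ 1 :=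
  hγ.2 ▸ setIntegral_le_integral hγ.integrable (ae_of_all _ hγ.1)

open Finset in
theorem SubSpherical.measure_pi_le_binomialTail {n : ℕ} {γ : ℝ → ℝ} {p : (Fin n → ℝ) → ℝ}
    (hγ : IsDensity1 γ) (hp : SubSpherical γ p) {e : Fin n → ℝ} (he : e ⬝ᵥ e = 1) {δ : ℝ}
    (hδ : 0 ≤ δ) (K m : ℕ) :
    (Measure.pi fun _ : Fin K => dMeas p) {ξ | m ≤ #{k | δ ≤ e ⬝ᵥ ξ k}} ≤
      ENNReal.ofReal (binomialTail K m (tailP γ δ)) := by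
  have := hp.1.isProbabilityMeasure_dMeas
  simpa only [Set.mem_ofPred_eq] using measure_pi_setOf_le_card_filter_mem_le _
    (measurableSet_le measurable_const (by fun_prop)) (hp.measureReal_halfSpace_le he hδ)
    (tailP_le_one hγ δ) K m

theorem dotProduct_inv_sqrt_smul_self {ι : Type*} [Fintype ι] {d : ι → ℝ} (hd : d ≠ 0) :
    ((√(d ⬝ᵥ d))⁻¹ • d) ⬝ᵥ ((√(d ⬝ᵥ d))⁻¹ • d) = 1 := by
  have hpos : 0 < d ⬝ᵥ d := lt_of_le_of_ne
    (by simpa only [star_trivial] using dotProduct_self_star_nonneg d)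
    (Ne.symm (dotProduct_self_eq_zero.not.2 hd))
  simp only [smul_dotProduct, dotProduct_smul, smul_eq_mul]
  rw [← mul_assoc, ← mul_inv, Real.mul_self_sqrt hpos.le, inv_mul_cancel₀ hpos.ne']

theorem separation_of_nearest_pair {ι : Type*} [Fintype ι] {X₁ X₂ : Set (ι → ℝ)}
    (hcv1 : Convex ℝ X₁) (hcv2 : Convex ℝ X₂) {x1 x2 : ι → ℝ} (hx1 : x1 ∈ X₁) (hx2 : x2 ∈ X₂)
    (hmin : ∀ y1 ∈ X₁, ∀ y2 ∈ X₂, (x1 - x2) ⬝ᵥ (x1 - x2) ≤ (y1 - y2) ⬝ᵥ (y1 - y2))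
    {δ : ℝ} (hδ : δ = √((x1 - x2) ⬝ᵥ (x1 - x2)) / 2)
    {h : ι → ℝ} (hh : h = (√((x1 - x2) ⬝ᵥ (x1 - x2)))⁻¹ • (x1 - x2))
    {c : ℝ} (hc : c = h ⬝ᵥ (x1 + x2) / 2) :
    (∀ x ∈ X₁, δ ≤ h ⬝ᵥ x - c) ∧ (∀ x ∈ X₂, h ⬝ᵥ x - c ≤ -δ) := by
  set D := √((x1 - x2) ⬝ᵥ (x1 - x2))
  have hD : D * D = (x1 - x2) ⬝ᵥ (x1 - x2) :=
    Real.mul_self_sqrt (by simpa only [star_trivial] using dotProduct_self_star_nonneg (x1 - x2))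
  have hgap : h ⬝ᵥ x1 - h ⬝ᵥ x2 = 2 * δ := by
    rw [← dotProduct_sub, hh, smul_dotProduct, smul_eq_mul, ← hD, ← mul_assoc, inv_mul_mul_self,
      hδ]
    ring
  have hpos {v : ι → ℝ} (hv : 0 ≤ (x1 - x2) ⬝ᵥ v) : 0 ≤ h ⬝ᵥ v := by
    rw [hh, smul_dotProduct, smul_eq_mul]
    positivity
  rw [hc, dotProduct_add]
  constructor
  · intro x hx
    have := hpos (dotProduct_sub_nonneg_of_forall_le hcv1 hx1 (fun y hy => hmin y hy x2 hx2) hx)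
    rw [dotProduct_sub] at this
    linarith
  · intro x hx
    have hmin' (y) (hy : y ∈ X₂) : (x2 - x1) ⬝ᵥ (x2 - x1) ≤ (y - x1) ⬝ᵥ (y - x1) := by
      simpa only [← neg_sub x1 x2, ← neg_sub x1 y, neg_dotProduct_neg] using hmin x1 hx1 y hy
    have := dotProduct_sub_nonneg_of_forall_le hcv2 hx2 hmin' hx
    rw [← neg_sub x1 x2, ← neg_sub x2 x, neg_dotProduct_neg] at this
    have := hpos this
    rw [dotProduct_sub] at this
    linarith

theorem statement8_general {n K : ℕ} (γ : ℝ → ℝ) (hγ : IsSpec γ)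
    (X₁ X₂ : Set (Fin n → ℝ))
    (hcv1 : Convex ℝ X₁) (hcv2 : Convex ℝ X₂)
    (hdisj : Disjoint X₁ X₂)
    (x1 x2 : Fin n → ℝ) (hx1 : x1 ∈ X₁) (hx2 : x2 ∈ X₂)
    (hmin : ∀ y1 ∈ X₁, ∀ y2 ∈ X₂,
      (x1 - x2) ⬝ᵥ (x1 - x2) ≤ (y1 - y2) ⬝ᵥ (y1 - y2))
    (δ : ℝ) (hδ : δ = Real.sqrt ((x1 - x2) ⬝ᵥ (x1 - x2)) / 2)
    (h : Fin n → ℝ) (hh : h = (Real.sqrt ((x1 - x2) ⬝ᵥ (x1 - x2)))⁻¹ • (x1 - x2))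
    (c : ℝ) (hc : c = h ⬝ᵥ (x1 + x2) / 2)
    (ε : ℝ) (hε : ε = tailP γ δ) :
    (∀ x ∈ X₁, ∀ p : (Fin n → ℝ) → ℝ, SubSpherical γ p →
      (Measure.pi fun _ : Fin K => dMeas p)
        {ξ : Fin K → Fin n → ℝ |
          ¬ K ≤ 2 * (Finset.univ.filter fun k : Fin K => 0 ≤ h ⬝ᵥ (x + ξ k) - c).card}
        ≤ ENNReal.ofReal (∑ k ∈ (Finset.range (K + 1)).filter fun k => K ≤ 2 * k,
            (K.choose k : ℝ) * ε ^ k * (1 - ε) ^ (K - k))) ∧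
    (∀ x ∈ X₂, ∀ p : (Fin n → ℝ) → ℝ, SubSpherical γ p →
      (Measure.pi fun _ : Fin K => dMeas p)
        {ξ : Fin K → Fin n → ℝ |
          K ≤ 2 * (Finset.univ.filter fun k : Fin K => 0 ≤ h ⬝ᵥ (x + ξ k) - c).card}
        ≤ ENNReal.ofReal (∑ k ∈ (Finset.range (K + 1)).filter fun k => K ≤ 2 * k,
            (K.choose k : ℝ) * ε ^ k * (1 - ε) ^ (K - k))) := by
  obtain ⟨hsep1, hsep2⟩ := separation_of_nearest_pair hcv1 hcv2 hx1 hx2 hmin hδ hh hc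
  have hunit : h ⬝ᵥ h = 1 :=
    hh ▸ dotProduct_inv_sqrt_smul_self (sub_ne_zero.2 (hdisj.ne_of_mem hx1 hx2))
  have hδ0 : 0 ≤ δ := hδ ▸ by positivity
  rw [hε, sum_filter_le_two_mul_eq_binomialTail]
  refine ⟨fun x hx p hp => ?_, fun x hx p hp => ?_⟩
  · refine (measure_mono fun ξ hξ => ?_).trans
      (hp.measure_pi_le_binomialTail hγ.1 ((neg_dotProduct_neg h h).trans hunit) hδ0 K _)
    have hsplit := Finset.card_filter_add_card_filter_not (s := Finset.univ)
      (fun k : Fin K => 0 ≤ h ⬝ᵥ (x + ξ k) - c)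
    have hbad : (Finset.univ.filter fun k => ¬ 0 ≤ h ⬝ᵥ (x + ξ k) - c).card ≤
        (Finset.univ.filter fun k => δ ≤ -h ⬝ᵥ ξ k).card :=
      Finset.card_le_card <| Finset.monotone_filter_right _ fun k _ hk => by
        rw [dotProduct_add] at hk
        rw [neg_dotProduct]
        linarith [hsep1 x hx]
    simp only [Finset.card_univ, Fintype.card_fin, Set.mem_ofPred_eq] at hsplit hξ
    exact le_trans (by omega) hbad
  · refine (measure_mono fun ξ hξ => ?_).trans (hp.measure_pi_le_binomialTail hγ.1 hunit hδ0 K _)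
    have hgood : (Finset.univ.filter fun k => 0 ≤ h ⬝ᵥ (x + ξ k) - c).card ≤
        (Finset.univ.filter fun k => δ ≤ h ⬝ᵥ ξ k).card :=
      Finset.card_le_card <| Finset.monotone_filter_right _ fun k _ hk => by
        rw [dotProduct_add] at hk
        linarith [hsep2 x hx]
    simp only [Set.mem_ofPred_eq] at hξ
    exact le_trans (by omega) hgood

/-- the risk of the `K`-observation majority test (accept `H₁` iff
`s*(ω_k) ≥ 0` for at least `K/2` indices `k`) on stationary `K`-repeated observations
`ω_k = x + ξ_k`, `ξ_k` i.i.d. `∼ p ∈ P_γ`, is bounded by the binomial tail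
`Σ_{K ≥ k ≥ K/2} C(K,k) ε⋆^k (1−ε⋆)^{K−k}` with `ε⋆ = ∫_δ^∞ γ`. -/
theorem statement8 {n K : ℕ} (γ : ℝ → ℝ) (hγ : IsSpec γ)
    (X₁ X₂ : Set (Fin n → ℝ))
    (hne1 : X₁.Nonempty) (hne2 : X₂.Nonempty)
    (hcv1 : Convex ℝ X₁) (hcv2 : Convex ℝ X₂)
    (hcl1 : IsClosed X₁) (hcl2 : IsClosed X₂)
    (hbd : Bornology.IsBounded X₁ ∨ Bornology.IsBounded X₂)
    (hdisj : Disjoint X₁ X₂)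
    (x1 x2 : Fin n → ℝ) (hx1 : x1 ∈ X₁) (hx2 : x2 ∈ X₂)
    (hmin : ∀ y1 ∈ X₁, ∀ y2 ∈ X₂,
      (x1 - x2) ⬝ᵥ (x1 - x2) ≤ (y1 - y2) ⬝ᵥ (y1 - y2))
    (δ : ℝ) (hδ : δ = Real.sqrt ((x1 - x2) ⬝ᵥ (x1 - x2)) / 2)
    (h : Fin n → ℝ) (hh : h = (Real.sqrt ((x1 - x2) ⬝ᵥ (x1 - x2)))⁻¹ • (x1 - x2))
    (c : ℝ) (hc : c = h ⬝ᵥ (x1 + x2) / 2)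
    (ε : ℝ) (hε : ε = tailP γ δ) :
    (∀ x ∈ X₁, ∀ p : (Fin n → ℝ) → ℝ, SubSpherical γ p →
      (Measure.pi fun _ : Fin K => dMeas p)
        {ξ : Fin K → Fin n → ℝ |
          ¬ K ≤ 2 * (Finset.univ.filter fun k : Fin K => 0 ≤ h ⬝ᵥ (x + ξ k) - c).card}
        ≤ ENNReal.ofReal (∑ k ∈ (Finset.range (K + 1)).filter fun k => K ≤ 2 * k,
            (K.choose k : ℝ) * ε ^ k * (1 - ε) ^ (K - k))) ∧
    (∀ x ∈ X₂, ∀ p : (Fin n → ℝ) → ℝ, SubSpherical γ p →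
      (Measure.pi fun _ : Fin K => dMeas p)
        {ξ : Fin K → Fin n → ℝ |
          K ≤ 2 * (Finset.univ.filter fun k : Fin K => 0 ≤ h ⬝ᵥ (x + ξ k) - c).card}
        ≤ ENNReal.ofReal (∑ k ∈ (Finset.range (K + 1)).filter fun k => K ≤ 2 * k,
            (K.choose k : ℝ) * ε ^ k * (1 - ε) ^ (K - k))) :=
  statement8_general γ hγ X₁ X₂ hcv1 hcv2 hdisj x1 x2 hx1 hx2 hmin δ hδ h hh c hc ε hε
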